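/- arXiv:1412.5025 — 5 statements merged into one kernel-verified Lean document; each statement's English description precedes it below -/
import Mathlib

section
/- Let c be a real number with c > b̄/ā and let q = (q_n)_{n≥0} be a nonnegative summable real sequence satisfying a_n·c·q_n = b_{n+1}·q_{n+1} for every n ≥ 0. Then q_n = 0 for every n ≥ 0. -/
/-!
The recurrence reads `q (n + 1) = ρ n * q n` with `ρ n = c a_n / b_{n+1} > 0`, and
`ρ n = (ā c / b̄) ((n + 2) / (n + 3)) ^ r → ā c / b̄ > 1`. A nonzero term would therefore make
the whole tail nonzero, and the ratio test would then contradict summability.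
-/

open Filter Topology

theorem eq_zero_of_summable_of_succ_eq_smul {𝕜 E : Type*} [NormedField 𝕜] [NormedAddCommGroup E]
    [NormedSpace 𝕜 E] {q : ℕ → E} {ρ : ℕ → 𝕜} {l : ℝ} (hl : 1 < l)
    (hρ : Tendsto (fun n ↦ ‖ρ n‖) atTop (𝓝 l)) (hρ0 : ∀ n, ρ n ≠ 0) (hq : Summable q)
    (hrec : ∀ n, q (n + 1) = ρ n • q n) (m : ℕ) : q m = 0 := by
  by_contra hm
  have htail : ∀ n, q (n + m) ≠ 0 := by
    intro n
    induction n with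
    | zero => simpa using hm
    | succ k ih => rw [add_right_comm, hrec, smul_ne_zero_iff]; exact ⟨hρ0 _, ih⟩
  have hratio : Tendsto (fun n ↦ ‖q (n + 1 + m)‖ / ‖q (n + m)‖) atTop (𝓝 l) := by
    refine (hρ.comp (tendsto_add_atTop_nat m)).congr fun n ↦ ?_
    rw [add_right_comm, hrec, norm_smul, mul_div_cancel_right₀ _ (norm_ne_zero_iff.mpr (htail n))]
    rfl
  exact not_summable_of_ratio_test_tendsto_gt_one hl hratio ((summable_nat_add_iff m).mpr hq)

theorem tendsto_add_two_div_add_three_rpow (r : ℝ) :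
    Tendsto (fun n : ℕ ↦ (((n : ℝ) + 2) / ((n : ℝ) + 3)) ^ r) atTop (𝓝 1) := by
  have h : Tendsto (fun n : ℕ ↦ ((n : ℝ) + 2) / ((n : ℝ) + 3)) atTop (𝓝 1) := by
    simpa [add_comm] using tendsto_add_mul_div_add_mul_atTop_nhds (2 : ℝ) 3 1 one_ne_zero
  simpa using h.rpow_const (p := r) (Or.inl one_ne_zero)

theorem becker_doring_stationary_states_supercritical_general
    (abar bbar r : ℝ) (habar : 0 < abar) (hbbar : 0 < bbar)
    (a b : ℕ → ℝ)
    (ha : ∀ n : ℕ, a n = abar * ((n : ℝ) + 2) ^ r)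
    (hb : ∀ n : ℕ, 1 ≤ n → b n = bbar * ((n : ℝ) + 2) ^ r)
    (c : ℝ) (hc : bbar / abar < c)
    (q : ℕ → ℝ) (hqsum : Summable q)
    (hrec : ∀ n : ℕ, a n * c * q n = b (n + 1) * q (n + 1)) :
    ∀ n : ℕ, q n = 0 := by
  have hc0 : 0 < c := (div_pos hbbar habar).trans hc
  have hl : 1 < abar * c / bbar := by
    rw [div_lt_iff₀ habar] at hc
    rw [one_lt_div hbbar]
    linarith
  have hb_pos : ∀ n, 0 < b (n + 1) := fun n ↦ by rw [hb _ (Nat.le_add_left 1 n)]; positivity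
  have hρ : ∀ n : ℕ,
      a n * c / b (n + 1) = abar * c / bbar * (((n : ℝ) + 2) / ((n : ℝ) + 3)) ^ r := by
    intro n
    rw [ha, hb _ (Nat.le_add_left 1 n), Real.div_rpow (by positivity) (by positivity)]
    push_cast
    field_simp
    ring_nf
  refine eq_zero_of_summable_of_succ_eq_smul hl (ρ := fun n ↦ a n * c / b (n + 1)) ?_
    (fun n ↦ ?_) hqsum (fun n ↦ ?_)
  · have h := (tendsto_add_two_div_add_three_rpow r).const_mul (abar * c / bbar)
    rw [mul_one] at h
    refine h.congr fun n ↦ ?_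
    rw [hρ, Real.norm_of_nonneg (by positivity)]
  · rw [ha]; exact div_ne_zero (by positivity) (hb_pos n).ne'
  · rw [smul_eq_mul, div_mul_eq_mul_div, hrec, mul_div_cancel_left₀ _ (hb_pos n).ne']

theorem becker_doring_stationary_states_supercritical
    (abar bbar r : ℝ) (habar : 0 < abar) (hbbar : 0 < bbar) (hr : 0 ≤ r)
    (a b Q : ℕ → ℝ)
    (ha : ∀ n : ℕ, a n = abar * ((n : ℝ) + 2) ^ r)
    (hb : ∀ n : ℕ, 1 ≤ n → b n = bbar * ((n : ℝ) + 2) ^ r)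
    (hQ0 : Q 0 = 1)
    (hQ : ∀ n : ℕ, 1 ≤ n → Q n = ∏ i ∈ Finset.range n, a i / b (i + 1))
    (c : ℝ) (hc : bbar / abar < c)
    (q : ℕ → ℝ) (hqnonneg : ∀ n : ℕ, 0 ≤ q n) (hqsum : Summable q)
    (hrec : ∀ n : ℕ, a n * c * q n = b (n + 1) * q (n + 1)) :
    ∀ n : ℕ, q n = 0 :=
  becker_doring_stationary_states_supercritical_general abar bbar r habar hbbar a b ha hb c hc q
    hqsum hrec
end

section
/- Let π be a Borel probability measure on ℓ¹ concentrated on the cone of nonnegative sequences, i.e. π({q : q_n ≥ 0 for all n}) = 1. Let N ≥ 1 be an integer, let V̄ : ℝ^N → ℝ be continuous, and set V(q) = V̄(q_0,…,q_{N−1}) for q ∈ ℓ¹. Assume that for every integer M ≥ N and every continuously differentiable compactly supported function F : ℝ^M → ℝ one has ∫_{ℓ¹} F(q_0,…,q_{M−1})·V(q) dπ(q) = 0. Then π({q : V(q) ≠ 0}) = 0, i.e. π is supported on the zero set of V. -/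
/-! Pushing `π` forward along the first `N` coordinates gives a finite measure on `ℝ^N` against
which `Vbar` integrates every `C¹` test function to zero (the case `M = N`), so `Vbar` vanishes
almost everywhere by the fundamental lemma of the calculus of variations. -/

open MeasureTheory

/-- The Banach space `ℓ¹` of real summable sequences indexed by `ℕ`. -/
noncomputable abbrev EllOne : Type := lp (fun _ : ℕ => ℝ) 1

noncomputable instance : MeasurableSpace EllOne := borel _
noncomputable instance : BorelSpace EllOne := ⟨rfl⟩

/-- The `n`-th coordinate of an element of `ℓ¹`. -/
noncomputable def coords (q : EllOne) : ℕ → ℝ := fun n => q n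

lemma measure_ne_zero_eq_zero_of_integral_contDiff_mul_eq_zero
    {E : Type*} [NormedAddCommGroup E] [NormedSpace ℝ E] [FiniteDimensional ℝ E]
    [MeasurableSpace E] [BorelSpace E] {μ : Measure E} [IsLocallyFiniteMeasure μ]
    {n : ℕ∞} {W : E → ℝ} (hW : LocallyIntegrable W μ)
    (h : ∀ F : E → ℝ, ContDiff ℝ n F → HasCompactSupport F → ∫ x, F x * W x ∂μ = 0) :
    μ {x | W x ≠ 0} = 0 :=
  ae_iff.1 <| ae_eq_zero_of_integral_contDiff_smul_eq_zero hW fun F hF hFsupp ↦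
    h F (hF.of_le (by exact_mod_cast le_top)) hFsupp

lemma continuous_coords_fin (N : ℕ) :
    Continuous fun q : EllOne => fun i : Fin N => coords q (i : ℕ) :=
  continuous_pi fun i ↦ (lp.lipschitzWith_one_eval 1 (i : ℕ)).continuous

theorem measure_supported_on_zero_set_general
    (π : Measure EllOne) [IsProbabilityMeasure π]
    (N : ℕ)
    (Vbar : (Fin N → ℝ) → ℝ) (hVbar : Continuous Vbar)
    (hzero : ∀ M : ℕ, N ≤ M → ∀ F : (Fin M → ℝ) → ℝ,
      ContDiff ℝ 1 F → HasCompactSupport F →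
      ∫ q, F (fun i : Fin M => coords q (i : ℕ)) *
          Vbar (fun i : Fin N => coords q (i : ℕ)) ∂π = 0) :
    π {q : EllOne | Vbar (fun i : Fin N => coords q (i : ℕ)) ≠ 0} = 0 := by
  have hP := (continuous_coords_fin N).measurable
  have hν : (π.map fun q (i : Fin N) => coords q i) {x | Vbar x ≠ 0} = 0 := by
    refine measure_ne_zero_eq_zero_of_integral_contDiff_mul_eq_zero
      (n := 1) hVbar.locallyIntegrable fun F hF hFsupp ↦ ?_
    rw [integral_map (f := fun x ↦ F x * Vbar x) hP.aemeasurable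
      (hF.continuous.mul hVbar).aestronglyMeasurable]
    exact hzero N le_rfl F hF hFsupp
  rwa [Measure.map_apply hP (isOpen_ne_fun hVbar continuous_const).measurableSet] at hν

theorem measure_supported_on_zero_set
    (π : Measure EllOne) [IsProbabilityMeasure π]
    (hπpos : π {q : EllOne | ∀ n : ℕ, 0 ≤ coords q n} = 1)
    (N : ℕ) (hN : 1 ≤ N)
    (Vbar : (Fin N → ℝ) → ℝ) (hVbar : Continuous Vbar)
    (hzero : ∀ M : ℕ, N ≤ M → ∀ F : (Fin M → ℝ) → ℝ,
      ContDiff ℝ 1 F → HasCompactSupport F →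
      ∫ q, F (fun i : Fin M => coords q (i : ℕ)) *
          Vbar (fun i : Fin N => coords q (i : ℕ)) ∂π = 0) :
    π {q : EllOne | Vbar (fun i : Fin N => coords q (i : ℕ)) ≠ 0} = 0 :=
  measure_supported_on_zero_set_general π N Vbar hVbar hzero
end

section
/- Let c be a real number with c > b̄/ā and let π be a Borel probability measure on ℓ¹ concentrated on the cone of nonnegative sequences with ∫_{ℓ¹} ‖q‖_{ℓ¹} dπ(q) < ∞. Assume that for every integer N ≥ 1 and every function G ∈ C²(ℝ^N) with G(0) = 0 whose partial derivatives ∂_0 G, …, ∂_{N−1} G are each continuously differentiable with compact support, one has ∫_{ℓ¹} ∑_{n=0}^{N−1} ∂_n G(q_0,…,q_{N−1})·(J_{n−1}(q) − J_n(q)) dπ(q) = 0. Then π is the Dirac measure at the zero sequence of ℓ¹. -/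
open MeasureTheory Filter

/-- The Becker–Döring flux `J_n(q) = a_n · c · q_n − b_{n+1} · q_{n+1}`,
with `a_n = ā (n+2)^r` and `b_n = b̄ (n+2)^r`. -/
noncomputable def fluxJ (abar bbar r c : ℝ) (q : ℕ → ℝ) (n : ℕ) : ℝ :=
  abar * ((n : ℝ) + 2) ^ r * c * q n - bbar * ((n : ℝ) + 3) ^ r * q (n + 1)

/-- `J_{n-1}`, with the convention `J_{-1} = 0`. -/
noncomputable def fluxJprev (abar bbar r c : ℝ) (q : ℕ → ℝ) : ℕ → ℝ
  | 0 => 0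
  | n + 1 => fluxJ abar bbar r c q n

/-!
Testing the weak stationarity identity against `x ↦ x_k φ(x / M)` on `ℝ^{k+1}`, with `φ` a bump
equal to `1` near `0`, and letting `M → ∞` (the derivatives stay bounded, so the first moment
dominates) gives `∫ (J_{k-1} - J_k) dπ = 0`, hence `∫ J_k dπ = 0` for every `k`. For the moments
`m_n = ∫ q_n dπ` this reads `a_n c m_n = b_{n+1} m_{n+1}`. The ratio `a_n c / b_{n+1}` tends to
`ā c / b̄ > 1`, so a nonzero moment would force geometric growth, contradicting
`m_n ≤ ∫ ‖q‖ dπ`. Thus all moments vanish, and as `q ≥ 0` almost surely, `q = 0` almost surely.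
-/

open Topology

lemma exists_norm_mul_norm_fderiv_le {E F : Type*} [NormedAddCommGroup E] [NormedSpace ℝ E]
    [NormedAddCommGroup F] [NormedSpace ℝ F]
    {f : E → F} (hf : ContDiff ℝ 1 f) (hfc : HasCompactSupport f) :
    ∃ C, ∀ y, ‖y‖ * ‖fderiv ℝ f y‖ ≤ C := by
  obtain ⟨C, hC⟩ := (continuous_norm.mul (hf.continuous_fderiv one_ne_zero).norm
    ).bounded_above_of_compact_support (hfc.fderiv (𝕜 := ℝ)).norm.mul_left
  exact ⟨C, fun y => (le_abs_self _).trans (hC y)⟩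

section BumpTruncation

variable {E : Type*} [NormedAddCommGroup E] [NormedSpace ℝ E] [HasContDiffBump E]

noncomputable def bumpTruncation (φ : ContDiffBump (0 : E)) (ℓ : E →L[ℝ] ℝ) (M : ℝ) (x : E) : ℝ :=
  ℓ x * φ (M⁻¹ • x)

variable (φ : ContDiffBump (0 : E)) (ℓ : E →L[ℝ] ℝ) (M : ℝ)

lemma bumpTruncation_zero : bumpTruncation φ ℓ M 0 = 0 := by
  simp [bumpTruncation]

lemma contDiff_bumpTruncation {n : ℕ∞} : ContDiff ℝ n (bumpTruncation φ ℓ M) :=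
  ℓ.contDiff.mul (φ.contDiff.comp (contDiff_const_smul M⁻¹))

lemma hasCompactSupport_bumpTruncation [FiniteDimensional ℝ E] (hM : M ≠ 0) :
    HasCompactSupport (bumpTruncation φ ℓ M) :=
  (φ.hasCompactSupport.comp_smul (inv_ne_zero hM)).mul_left

lemma hasFDerivAt_bumpTruncation (x : E) :
    HasFDerivAt (bumpTruncation φ ℓ M)
      (ℓ x • M⁻¹ • fderiv ℝ φ (M⁻¹ • x) + φ (M⁻¹ • x) • ℓ) x := by
  have hφ : HasFDerivAt (fun y => φ (M⁻¹ • y)) (M⁻¹ • fderiv ℝ φ (M⁻¹ • x)) x := by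
    have := ((φ.contDiff (n := 1)).differentiable one_ne_zero (M⁻¹ • x)).hasFDerivAt.comp x
      ((hasFDerivAt_id x).const_smul M⁻¹)
    simpa [Function.comp_def, ContinuousLinearMap.comp_smul] using this
  exact ℓ.hasFDerivAt.mul hφ

lemma fderiv_bumpTruncation_of_norm_lt (hM : 0 < M) {x : E} (hx : ‖x‖ < M * φ.rIn) :
    fderiv ℝ (bumpTruncation φ ℓ M) x = ℓ := by
  have hball : ∀ᶠ y in 𝓝 x, ‖y‖ < M * φ.rIn :=
    (continuous_norm.isOpen_preimage _ isOpen_Iio).mem_nhds hx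
  have heq : bumpTruncation φ ℓ M =ᶠ[𝓝 x] ℓ := hball.mono fun y hy => by
    rw [bumpTruncation, φ.one_of_mem_closedBall, mul_one]
    rw [Metric.mem_closedBall, dist_zero_right, norm_smul, norm_inv, Real.norm_of_nonneg hM.le,
      inv_mul_le_iff₀ hM]
    exact hy.le
  exact heq.fderiv_eq.trans ℓ.fderiv

lemma exists_norm_fderiv_bumpTruncation_le [FiniteDimensional ℝ E] :
    ∃ C, ∀ M x, ‖fderiv ℝ (bumpTruncation φ ℓ M) x‖ ≤ C := by
  obtain ⟨C, hC⟩ := exists_norm_mul_norm_fderiv_le φ.contDiff φ.hasCompactSupport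
  refine ⟨‖ℓ‖ * (C + 1), fun M x => ?_⟩
  rw [(hasFDerivAt_bumpTruncation φ ℓ M x).fderiv]
  set y := M⁻¹ • x
  have hy : ℓ x * M⁻¹ = ℓ y := by simp [y, mul_comm]
  calc ‖ℓ x • M⁻¹ • fderiv ℝ φ y + φ y • ℓ‖
      ≤ ‖ℓ y‖ * ‖fderiv ℝ φ y‖ + ‖ℓ‖ := by
        refine (norm_add_le _ _).trans (add_le_add (le_of_eq ?_) ?_)
        · rw [← smul_assoc, norm_smul, smul_eq_mul, hy]
        · rw [norm_smul, Real.norm_of_nonneg φ.nonneg]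
          exact mul_le_of_le_one_left (norm_nonneg _) φ.le_one
    _ ≤ ‖ℓ‖ * ‖y‖ * ‖fderiv ℝ φ y‖ + ‖ℓ‖ := by
        gcongr
        exact ℓ.le_opNorm y
    _ ≤ ‖ℓ‖ * (C + 1) := by
        rw [mul_assoc, mul_add_one]
        gcongr
        exact hC y

theorem tendsto_integral_fderiv_bumpTruncation [FiniteDimensional ℝ E]
    {X : Type*} [MeasurableSpace X] {μ : Measure X} {P V : X → E}
    (hP : AEStronglyMeasurable P μ) (hV : Integrable V μ) :
    Tendsto (fun M => ∫ x, fderiv ℝ (bumpTruncation φ ℓ M) (P x) (V x) ∂μ) atTop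
      (𝓝 (∫ x, ℓ (V x) ∂μ)) := by
  obtain ⟨C, hC⟩ := exists_norm_fderiv_bumpTruncation_le φ ℓ
  refine tendsto_integral_filter_of_dominated_convergence (fun x => C * ‖V x‖) ?_ ?_
    (hV.norm.const_mul C) ?_
  · exact Eventually.of_forall fun M =>
      (continuous_fst.clm_apply continuous_snd).comp_aestronglyMeasurable₂
        (((contDiff_bumpTruncation φ ℓ M (n := 1)).continuous_fderiv one_ne_zero
          ).comp_aestronglyMeasurable hP) hV.aestronglyMeasurable
  · exact Eventually.of_forall fun M => Eventually.of_forall fun x =>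
      (ContinuousLinearMap.le_opNorm _ _).trans (by gcongr; exact hC M (P x))
  · refine Eventually.of_forall fun x => tendsto_const_nhds.congr' ?_
    filter_upwards [eventually_gt_atTop 0, eventually_gt_atTop (‖P x‖ / φ.rIn)] with M hM hMx
    rw [fderiv_bumpTruncation_of_norm_lt φ ℓ M hM ((div_lt_iff₀ φ.rIn_pos).mp hMx)]

end BumpTruncation

lemma ContinuousLinearMap.sum_apply_single_one_mul {ι : Type*} [Fintype ι] [DecidableEq ι]
    (L : (ι → ℝ) →L[ℝ] ℝ) (v : ι → ℝ) : ∑ i, L (Pi.single i 1) * v i = L v := by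
  conv_rhs => rw [pi_eq_sum_univ' v]
  simp [map_sum, mul_comm]

lemma eq_zero_of_succ_eq_mul_of_tendsto {u ρ : ℕ → ℝ} {L : ℝ} (hL : 1 < L)
    (hρ : Tendsto ρ atTop (𝓝 L)) (hρ_pos : ∀ n, 0 < ρ n) (hrec : ∀ n, u (n + 1) = ρ n * u n)
    (hu : ∀ n, 0 ≤ u n) (hbdd : BddAbove (Set.range u)) (n : ℕ) : u n = 0 := by
  suffices hu0 : u 0 = 0 by
    induction n with
    | zero => exact hu0
    | succ n ih => rw [hrec, ih, mul_zero]
  by_contra h0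
  have hpos : ∀ n, 0 < u n := fun n => by
    induction n with
    | zero => exact (hu 0).lt_of_ne' h0
    | succ n ih => rw [hrec]; exact mul_pos (hρ_pos n) ih
  obtain ⟨s, hs1, hsL⟩ := exists_between hL
  obtain ⟨K, hK⟩ := eventually_atTop.mp (hρ.eventually_const_le hsL)
  have hgeom : Tendsto (fun j => u (K + j)) atTop atTop :=
    tendsto_atTop_of_geom_le (hpos K) hs1 fun j => by
      rw [← add_assoc, hrec]
      exact mul_le_mul_of_nonneg_right (hK _ (Nat.le_add_right K j)) (hu _)
  obtain ⟨C, hC⟩ := hbdd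
  obtain ⟨j, hj⟩ := (hgeom.eventually_gt_atTop C).exists
  exact hj.not_ge (hC ⟨K + j, rfl⟩)

lemma tendsto_add_rpow_div_add_rpow (a b r : ℝ) :
    Tendsto (fun n : ℕ => ((n : ℝ) + a) ^ r / ((n : ℝ) + b) ^ r) atTop (𝓝 1) := by
  have hnat : Tendsto (fun n : ℕ => (n : ℝ)) atTop atTop := tendsto_natCast_atTop_atTop
  have hquot : Tendsto (fun n : ℕ => ((n : ℝ) + a) / ((n : ℝ) + b)) atTop (𝓝 1) := by
    have hinv : Tendsto (fun n : ℕ => ((n : ℝ) + b)⁻¹) atTop (𝓝 0) :=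
      (tendsto_atTop_add_const_right _ b hnat).inv_tendsto_atTop
    have := tendsto_const_nhds (x := (1 : ℝ)).add ((tendsto_const_nhds (x := a - b)).mul hinv)
    rw [mul_zero, add_zero] at this
    refine this.congr' ?_
    filter_upwards [hnat.eventually_gt_atTop (-b)] with n hn
    field_simp [show (n : ℝ) + b ≠ 0 by linarith]
    ring
  have hpow := ((Real.continuousAt_rpow_const 1 r (Or.inl one_ne_zero)).tendsto.comp hquot)
  rw [Real.one_rpow] at hpow
  refine hpow.congr' ?_
  filter_upwards [hnat.eventually_ge_atTop (-a), hnat.eventually_ge_atTop (-b)] with n ha hb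
  exact Real.div_rpow (by linarith) (by linarith) r

lemma MeasureTheory.Measure.eq_dirac_of_ae_eq {α : Type*} [MeasurableSpace α] {μ : Measure α}
    [IsProbabilityMeasure μ] {a : α} (h : ∀ᵐ x ∂μ, x = a) : μ = Measure.dirac a :=
  calc μ = μ.map id := Measure.map_id.symm
    _ = μ.map (fun _ => a) := Measure.map_congr h
    _ = Measure.dirac a := by rw [Measure.map_const, measure_univ, one_smul]

lemma abs_coords_le_norm (q : EllOne) (n : ℕ) : |coords q n| ≤ ‖q‖ :=
  lp.norm_apply_le_norm one_ne_zero q n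

lemma continuous_coords (n : ℕ) : Continuous fun q : EllOne => coords q n :=
  (lp.lipschitzWith_one_eval 1 n).continuous

section Moments

variable {abar bbar r c : ℝ} {π : Measure EllOne}

lemma integrable_norm_of_lintegral_ne_top (h : ∫⁻ q : EllOne, (‖q‖₊ : ENNReal) ∂π ≠ ⊤) :
    Integrable (fun q : EllOne => ‖q‖) π :=
  ⟨continuous_norm.aestronglyMeasurable,
    by simpa [HasFiniteIntegral, lt_top_iff_ne_top, enorm_eq_nnnorm] using h⟩

variable (hint : Integrable (fun q : EllOne => ‖q‖) π)
include hint

lemma integrable_coords (n : ℕ) : Integrable (fun q => coords q n) π :=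
  hint.mono (continuous_coords n).aestronglyMeasurable <| Eventually.of_forall fun q => by
    simpa using abs_coords_le_norm q n

lemma integrable_fluxJ (n : ℕ) : Integrable (fun q => fluxJ abar bbar r c (coords q) n) π :=
  ((integrable_coords hint n).const_mul _).sub ((integrable_coords hint (n + 1)).const_mul _)

lemma integrable_fluxJprev (n : ℕ) : Integrable (fun q => fluxJprev abar bbar r c (coords q) n) π :=
  match n with
  | 0 => integrable_zero _ _ _
  | n + 1 => integrable_fluxJ hint n

lemma integral_fluxJ (n : ℕ) : ∫ q, fluxJ abar bbar r c (coords q) n ∂π =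
    abar * ((n : ℝ) + 2) ^ r * c * ∫ q, coords q n ∂π -
      bbar * ((n : ℝ) + 3) ^ r * ∫ q, coords q (n + 1) ∂π := by
  rw [← integral_const_mul, ← integral_const_mul, ← integral_sub]
  · rfl
  · exact (integrable_coords hint n).const_mul _
  · exact (integrable_coords hint (n + 1)).const_mul _

lemma ae_eq_zero_of_integral_coords_eq_zero (hnonneg : ∀ᵐ q ∂π, ∀ n, 0 ≤ coords q n)
    (h : ∀ n, ∫ q, coords q n ∂π = 0) : ∀ᵐ q ∂π, q = 0 := by
  have hcoords : ∀ n, ∀ᵐ q ∂π, coords q n = 0 := fun n =>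
    (integral_eq_zero_iff_of_nonneg_ae (hnonneg.mono fun q hq => hq n)
      (integrable_coords hint n)).mp (h n)
  filter_upwards [ae_all_iff.mpr hcoords] with q hq
  exact lp.ext (funext hq)

end Moments

lemma ae_coords_nonneg {π : Measure EllOne} [IsProbabilityMeasure π]
    (h : π {q : EllOne | ∀ n : ℕ, 0 ≤ coords q n} = 1) : ∀ᵐ q ∂π, ∀ n, 0 ≤ coords q n := by
  have hclosed : IsClosed {q : EllOne | ∀ n : ℕ, 0 ≤ coords q n} := by
    simpa only [Set.ofPred_forall] using
      isClosed_iInter fun n => isClosed_le continuous_const (continuous_coords n)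
  exact (ae_iff_measure_eq hclosed.measurableSet.nullMeasurableSet).mpr (by rw [h, measure_univ])

def IsWeaklyStationary (abar bbar r c : ℝ) (π : Measure EllOne) : Prop :=
  ∀ N : ℕ, 1 ≤ N → ∀ G : (Fin N → ℝ) → ℝ,
    ContDiff ℝ 2 G → G 0 = 0 →
    (∀ n : Fin N,
      ContDiff ℝ 1 (fun x : Fin N → ℝ => fderiv ℝ G x (Pi.single n 1)) ∧
      HasCompactSupport (fun x : Fin N → ℝ => fderiv ℝ G x (Pi.single n 1))) →
    ∫ q, (∑ n : Fin N,
        fderiv ℝ G (fun i : Fin N => coords q (i : ℕ)) (Pi.single n 1) *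
          (fluxJprev abar bbar r c (coords q) (n : ℕ) -
            fluxJ abar bbar r c (coords q) (n : ℕ))) ∂π = 0

namespace IsWeaklyStationary

variable {abar bbar r c : ℝ} {π : Measure EllOne} (hπ : IsWeaklyStationary abar bbar r c π)
  (hint : Integrable (fun q : EllOne => ‖q‖) π)
include hπ hint

theorem integral_fluxJprev_sub_fluxJ (k : ℕ) :
    ∫ q, (fluxJprev abar bbar r c (coords q) k - fluxJ abar bbar r c (coords q) k) ∂π = 0 := by
  let φ : ContDiffBump (0 : Fin (k + 1) → ℝ) := default
  let ℓ : (Fin (k + 1) → ℝ) →L[ℝ] ℝ := ContinuousLinearMap.proj (Fin.last k)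
  let P : EllOne → Fin (k + 1) → ℝ := fun q i => coords q i
  let V : EllOne → Fin (k + 1) → ℝ := fun q n =>
    fluxJprev abar bbar r c (coords q) n - fluxJ abar bbar r c (coords q) n
  have hP : AEStronglyMeasurable P π :=
    (continuous_pi fun i : Fin (k + 1) => continuous_coords i).aestronglyMeasurable
  have hV : Integrable V π := Integrable.of_eval fun n =>
    (integrable_fluxJprev hint n).sub (integrable_fluxJ hint n)
  have htest : ∀ M > 0, ∫ q, fderiv ℝ (bumpTruncation φ ℓ M) (P q) (V q) ∂π = 0 := by
    intro M hM
    have hG : ContDiff ℝ 2 (bumpTruncation φ ℓ M) := contDiff_bumpTruncation φ ℓ M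
    have hGc := hasCompactSupport_bumpTruncation φ ℓ M hM.ne'
    simpa only [ContinuousLinearMap.sum_apply_single_one_mul] using hπ (k + 1) k.succ_pos _
      hG (bumpTruncation_zero φ ℓ M) fun n =>
        ⟨(hG.fderiv_right (m := 1) le_rfl).clm_apply contDiff_const,
          hGc.fderiv_apply (𝕜 := ℝ) (Pi.single n 1)⟩
  have hlim := tendsto_nhds_unique (tendsto_integral_fderiv_bumpTruncation φ ℓ hP hV)
    (tendsto_const_nhds.congr' ((eventually_gt_atTop 0).mono fun M hM => (htest M hM).symm))
  simpa [ℓ, V] using hlim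

theorem integral_fluxJ_eq_zero (k : ℕ) : ∫ q, fluxJ abar bbar r c (coords q) k ∂π = 0 := by
  have h j := (integral_sub (integrable_fluxJprev hint j) (integrable_fluxJ hint j)).symm.trans
    (hπ.integral_fluxJprev_sub_fluxJ hint j)
  induction k with
  | zero => simpa [fluxJprev] using h 0
  | succ k ih => simpa [fluxJprev, ih] using h (k + 1)

theorem integral_coords_succ (hbbar : 0 < bbar) (n : ℕ) :
    ∫ q, coords q (n + 1) ∂π =
      abar * ((n : ℝ) + 2) ^ r * c / (bbar * ((n : ℝ) + 3) ^ r) * ∫ q, coords q n ∂π := by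
  have h := hπ.integral_fluxJ_eq_zero hint n
  rw [integral_fluxJ hint n, sub_eq_zero] at h
  field_simp
  linarith

theorem integral_coords_eq_zero (habar : 0 < abar) (hbbar : 0 < bbar) (hc : bbar / abar < c)
    (hnonneg : ∀ᵐ q ∂π, ∀ n, 0 ≤ coords q n) (n : ℕ) : ∫ q, coords q n ∂π = 0 := by
  have hc0 : 0 < c := (div_pos hbbar habar).trans hc
  have hL : 1 < abar * c / bbar := by
    rwa [one_lt_div hbbar, ← div_lt_iff₀' habar]
  have hratio : Tendsto (fun n : ℕ => abar * ((n : ℝ) + 2) ^ r * c / (bbar * ((n : ℝ) + 3) ^ r))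
      atTop (𝓝 (abar * c / bbar)) := by
    have := (tendsto_add_rpow_div_add_rpow 2 3 r).const_mul (abar * c / bbar)
    rw [mul_one] at this
    refine this.congr fun n => ?_
    field_simp
  refine eq_zero_of_succ_eq_mul_of_tendsto hL hratio (fun n => by positivity)
    (hπ.integral_coords_succ hint hbbar)
    (fun n => integral_nonneg_of_ae (hnonneg.mono fun q hq => hq n)) ⟨∫ q, ‖q‖ ∂π, ?_⟩ n
  rintro _ ⟨m, rfl⟩
  exact integral_mono (integrable_coords hint m) hint fun q =>
    (le_abs_self _).trans (abs_coords_le_norm q m)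

end IsWeaklyStationary

theorem stationary_measure_is_dirac_supercritical_general
    (abar bbar r : ℝ) (habar : 0 < abar) (hbbar : 0 < bbar)
    (c : ℝ) (hc : bbar / abar < c)
    (π : Measure EllOne) [IsProbabilityMeasure π]
    (hπpos : π {q : EllOne | ∀ n : ℕ, 0 ≤ coords q n} = 1)
    (hπmom : (∫⁻ q : EllOne, (‖q‖₊ : ENNReal) ∂π) ≠ ⊤)
    (hstat : ∀ N : ℕ, 1 ≤ N → ∀ G : (Fin N → ℝ) → ℝ,
      ContDiff ℝ 2 G → G 0 = 0 →
      (∀ n : Fin N,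
        ContDiff ℝ 1 (fun x : Fin N → ℝ => fderiv ℝ G x (Pi.single n 1)) ∧
        HasCompactSupport (fun x : Fin N → ℝ => fderiv ℝ G x (Pi.single n 1))) →
      ∫ q, (∑ n : Fin N,
          fderiv ℝ G (fun i : Fin N => coords q (i : ℕ)) (Pi.single n 1) *
            (fluxJprev abar bbar r c (coords q) (n : ℕ) -
              fluxJ abar bbar r c (coords q) (n : ℕ))) ∂π = 0) :
    π = Measure.dirac (0 : EllOne) := by
  have hπ : IsWeaklyStationary abar bbar r c π := hstat
  have hint := integrable_norm_of_lintegral_ne_top hπmom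
  have hnonneg := ae_coords_nonneg hπpos
  exact Measure.eq_dirac_of_ae_eq <| ae_eq_zero_of_integral_coords_eq_zero hint hnonneg <|
    hπ.integral_coords_eq_zero hint habar hbbar hc hnonneg

theorem stationary_measure_is_dirac_supercritical
    (abar bbar r : ℝ) (habar : 0 < abar) (hbbar : 0 < bbar) (hr : 0 ≤ r)
    (c : ℝ) (hc : bbar / abar < c)
    (π : Measure EllOne) [IsProbabilityMeasure π]
    (hπpos : π {q : EllOne | ∀ n : ℕ, 0 ≤ coords q n} = 1)
    (hπmom : (∫⁻ q : EllOne, (‖q‖₊ : ENNReal) ∂π) ≠ ⊤)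
    (hstat : ∀ N : ℕ, 1 ≤ N → ∀ G : (Fin N → ℝ) → ℝ,
      ContDiff ℝ 2 G → G 0 = 0 →
      (∀ n : Fin N,
        ContDiff ℝ 1 (fun x : Fin N → ℝ => fderiv ℝ G x (Pi.single n 1)) ∧
        HasCompactSupport (fun x : Fin N → ℝ => fderiv ℝ G x (Pi.single n 1))) →
      ∫ q, (∑ n : Fin N,
          fderiv ℝ G (fun i : Fin N => coords q (i : ℕ)) (Pi.single n 1) *
            (fluxJprev abar bbar r c (coords q) (n : ℕ) -
              fluxJ abar bbar r c (coords q) (n : ℕ))) ∂π = 0) :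
    π = Measure.dirac (0 : EllOne) :=
  stationary_measure_is_dirac_supercritical_general abar bbar r habar hbbar c hc π hπpos hπmom hstat
end

section
/- Let ν be a finite Borel measure on [0,∞), let K_a > 0, let a : [0,∞) → [0,∞) be measurable with a(x) ≤ K_a(1+x) for all x ≥ 0, and let Φ : [0,∞) → [0,∞) be differentiable with derivative Φ' nonnegative and nondecreasing, satisfying x·Φ'(x) ≤ 2Φ(x) for all x ≥ 0. Then for every R > 0, ∫_{[0,∞)} Φ'(x)·a(x) dν(x) ≤ K_a·Φ'(R)·ν([0,∞)) + 2K_a·(1 + 1/R)·∫_{[0,∞)} Φ(x) dν(x). -/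
/-!
For `x ≥ 0` one has `Φ'(x) ≤ Φ'(R) + 2Φ(x)/R`: below `R` by monotonicity of `Φ'`, above `R`
because `R Φ'(x) ≤ x Φ'(x) ≤ 2Φ(x)`. Hence `Φ'(x) a(x) ≤ K_a Φ'(x) + K_a x Φ'(x)
≤ K_a Φ'(R) + 2K_a (1 + 1/R) Φ(x)` for `ν`-a.e. `x`, and it remains to integrate.
-/

open MeasureTheory Set

lemma ae_nonneg_of_measure_Iio_zero {ν : Measure ℝ} (hν : ν (Iio 0) = 0) :
    ∀ᵐ x ∂ν, 0 ≤ x := by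
  rw [ae_iff]
  simp only [not_le]
  exact hν

lemma lintegral_ofReal_le_const_add_mul {α : Type*} [MeasurableSpace α] {μ : Measure α}
    {f g : α → ℝ} {c d : ℝ} (hd : 0 ≤ d) (hfg : ∀ᵐ x ∂μ, f x ≤ c + d * g x) :
    ∫⁻ x, ENNReal.ofReal (f x) ∂μ
      ≤ ENNReal.ofReal c * μ univ + ENNReal.ofReal d * ∫⁻ x, ENNReal.ofReal (g x) ∂μ := by
  calc ∫⁻ x, ENNReal.ofReal (f x) ∂μ
      ≤ ∫⁻ x, (ENNReal.ofReal c + ENNReal.ofReal d * ENNReal.ofReal (g x)) ∂μ := by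
        refine lintegral_mono_ae (hfg.mono fun x hx => ?_)
        rw [← ENNReal.ofReal_mul hd]
        exact (ENNReal.ofReal_le_ofReal hx).trans ENNReal.ofReal_add_le
    _ = ENNReal.ofReal c * μ univ + ENNReal.ofReal d * ∫⁻ x, ENNReal.ofReal (g x) ∂μ := by
        rw [lintegral_add_left measurable_const, lintegral_const,
          lintegral_const_mul' _ _ ENNReal.ofReal_ne_top]

lemma le_add_div_of_monotoneOn_of_mul_le {f : ℝ → ℝ} (hmono : MonotoneOn f (Ici 0))
    (hf : ∀ y, 0 ≤ y → 0 ≤ f y) {x R c : ℝ} (hx : 0 ≤ x) (hR : 0 < R)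
    (hxf : x * f x ≤ c) : f x ≤ f R + c / R := by
  have hc : 0 ≤ c := (mul_nonneg hx (hf x hx)).trans hxf
  rcases le_total x R with hxR | hRx
  · have : 0 ≤ c / R := div_nonneg hc hR.le
    linarith [hmono hx hR.le hxR]
  · have : f x ≤ c / R := by
      rw [le_div_iff₀ hR, mul_comm]
      exact (mul_le_mul_of_nonneg_right hRx (hf x hx)).trans hxf
    linarith [hf R hR.le]

theorem moment_drift_estimate_general
    (ν : Measure ℝ) (hν : ν (Set.Iio (0 : ℝ)) = 0)
    (Ka : ℝ) (hKa : 0 < Ka)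
    (a : ℝ → ℝ)
    (hab : ∀ x : ℝ, 0 ≤ x → a x ≤ Ka * (1 + x))
    (Phi Phi' : ℝ → ℝ)
    (hPhi'0 : ∀ x : ℝ, 0 ≤ x → 0 ≤ Phi' x)
    (hPhi'mono : MonotoneOn Phi' (Set.Ici (0 : ℝ)))
    (hxPhi' : ∀ x : ℝ, 0 ≤ x → x * Phi' x ≤ 2 * Phi x)
    (R : ℝ) (hR : 0 < R) :
    ∫⁻ x, ENNReal.ofReal (Phi' x * a x) ∂ν
      ≤ ENNReal.ofReal (Ka * Phi' R) * ν Set.univ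
        + ENNReal.ofReal (2 * Ka * (1 + 1 / R)) * ∫⁻ x, ENNReal.ofReal (Phi x) ∂ν := by
  have hbound : ∀ x, 0 ≤ x → Phi' x * a x ≤ Ka * Phi' R + 2 * Ka * (1 + 1 / R) * Phi x := by
    intro x hx
    have hxPhi'x := hxPhi' x hx
    have hPhi'x : Phi' x ≤ Phi' R + 2 * Phi x / R :=
      le_add_div_of_monotoneOn_of_mul_le hPhi'mono hPhi'0 hx hR hxPhi'x
    calc Phi' x * a x ≤ Phi' x * (Ka * (1 + x)) :=
          mul_le_mul_of_nonneg_left (hab x hx) (hPhi'0 x hx)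
      _ = Ka * Phi' x + Ka * (x * Phi' x) := by ring
      _ ≤ Ka * (Phi' R + 2 * Phi x / R) + Ka * (2 * Phi x) := by gcongr
      _ = Ka * Phi' R + 2 * Ka * (1 + 1 / R) * Phi x := by ring
  exact lintegral_ofReal_le_const_add_mul (by positivity)
    ((ae_nonneg_of_measure_Iio_zero hν).mono hbound)

theorem moment_drift_estimate
    (ν : Measure ℝ) [IsFiniteMeasure ν] (hν : ν (Set.Iio (0 : ℝ)) = 0)
    (Ka : ℝ) (hKa : 0 < Ka)
    (a : ℝ → ℝ) (ham : Measurable a)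
    (ha0 : ∀ x : ℝ, 0 ≤ x → 0 ≤ a x)
    (hab : ∀ x : ℝ, 0 ≤ x → a x ≤ Ka * (1 + x))
    (Phi Phi' : ℝ → ℝ)
    (hPhi0 : ∀ x : ℝ, 0 ≤ x → 0 ≤ Phi x)
    (hPhideriv : ∀ x ∈ Set.Ici (0 : ℝ), HasDerivWithinAt Phi (Phi' x) (Set.Ici 0) x)
    (hPhi'0 : ∀ x : ℝ, 0 ≤ x → 0 ≤ Phi' x)
    (hPhi'mono : MonotoneOn Phi' (Set.Ici (0 : ℝ)))
    (hxPhi' : ∀ x : ℝ, 0 ≤ x → x * Phi' x ≤ 2 * Phi x)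
    (R : ℝ) (hR : 0 < R) :
    ∫⁻ x, ENNReal.ofReal (Phi' x * a x) ∂ν
      ≤ ENNReal.ofReal (Ka * Phi' R) * ν Set.univ
        + ENNReal.ofReal (2 * Ka * (1 + 1 / R)) * ∫⁻ x, ENNReal.ofReal (Phi x) ∂ν :=
  moment_drift_estimate_general ν hν Ka hKa a hab Phi Phi' hPhi'0 hPhi'mono hxPhi' R hR
end

section
/- Let E be a measurable space, ν a finite measure on E, H : E → [0,∞) measurable, Φ : [0,∞) → [0,∞) measurable, n₀ ≥ 0 a real number, and h : E → [0,∞) measurable with h(x) ≤ H(x) whenever H(x) > n₀. Then for every real n ≥ max(n₀, 1) such that Φ(y) > 0 for all y > n, one has ∫_{{x : H(x) > n}} (1 + h(x)) dν(x) ≤ (1/n + sup_{y > n} y/Φ(y)) · ∫_E (H(x) + Φ(H(x))) dν(x). -/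
open MeasureTheory NNReal
open scoped ENNReal

/-!
On `{H > n}` we have `1 ≤ H / n` and `h ≤ H = (H / Φ H) · Φ H ≤ (sup_{y > n} y / Φ y) · Φ H`,
so the integrand is bounded pointwise by `(1/n + sup_{y > n} y / Φ y) (H + Φ H)`; integrate.
-/

theorem add_le_add_mul_add {α : Type*} [NonUnitalNonAssocSemiring α] [PartialOrder α]
    [CanonicallyOrderedAdd α] [IsOrderedAddMonoid α] {a b c d u v : α}
    (ha : a ≤ c * u) (hb : b ≤ d * v) : a + b ≤ (c + d) * (u + v) :=
  calc a + b ≤ c * u + d * v := add_le_add ha hb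
    _ ≤ (c * u + c * v) + (d * u + d * v) := add_le_add le_self_add le_add_self
    _ = (c + d) * (u + v) := by rw [add_mul, mul_add, mul_add]

namespace ENNReal

theorem one_le_inv_mul_of_le {a b : ℝ≥0∞} (ha₀ : a ≠ 0) (ha : a ≠ ∞) (hab : a ≤ b) :
    1 ≤ a⁻¹ * b :=
  calc 1 = a⁻¹ * a := (ENNReal.inv_mul_cancel ha₀ ha).symm
    _ ≤ a⁻¹ * b := by gcongr

theorem le_biSup_div_mul {ι : Type*} (f g : ι → ℝ≥0∞) {s : Set ι} {i : ι} (hi : i ∈ s)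
    (hg₀ : g i ≠ 0) (hg : g i ≠ ∞) : f i ≤ (⨆ j ∈ s, f j / g j) * g i :=
  calc f i = f i / g i * g i := (ENNReal.div_mul_cancel hg₀ hg).symm
    _ ≤ (⨆ j ∈ s, f j / g j) * g i := by
      gcongr
      exact le_biSup (fun j => f j / g j) hi

end ENNReal

theorem setLIntegral_le_const_mul_lintegral {α : Type*} [MeasurableSpace α] {μ : Measure α}
    {s : Set α} (hs : MeasurableSet s) {f g : α → ℝ≥0∞} (hg : Measurable g) (c : ℝ≥0∞)
    (hfg : ∀ x ∈ s, f x ≤ c * g x) : ∫⁻ x in s, f x ∂μ ≤ c * ∫⁻ x, g x ∂μ :=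
  calc ∫⁻ x in s, f x ∂μ ≤ ∫⁻ x in s, c * g x ∂μ := setLIntegral_mono' hs hfg
    _ ≤ ∫⁻ x, c * g x ∂μ := setLIntegral_le_lintegral s _
    _ = c * ∫⁻ x, g x ∂μ := lintegral_const_mul c hg

theorem one_add_le_mul_add_of_lt {Phi : ℝ≥0 → ℝ≥0} {n s t : ℝ≥0} (hn : n ≠ 0) (hnt : n < t)
    (hst : s ≤ t) (hPhi : 0 < Phi t) :
    1 + (s : ℝ≥0∞) ≤ ((n : ℝ≥0∞)⁻¹ + ⨆ y ∈ Set.Ioi n, (y : ℝ≥0∞) / (Phi y : ℝ≥0∞)) *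
      ((t : ℝ≥0∞) + (Phi t : ℝ≥0∞)) := by
  refine add_le_add_mul_add
    (ENNReal.one_le_inv_mul_of_le (by exact_mod_cast hn) ENNReal.coe_ne_top
      (by exact_mod_cast hnt.le)) ?_
  exact (ENNReal.coe_le_coe.2 hst).trans <| ENNReal.le_biSup_div_mul (fun y : ℝ≥0 => (y : ℝ≥0∞))
    (fun y => (Phi y : ℝ≥0∞)) (Set.mem_Ioi.2 hnt) (by exact_mod_cast hPhi.ne') ENNReal.coe_ne_top

theorem superlevel_integral_bound_general
    {E : Type*} [MeasurableSpace E]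
    (ν : Measure E)
    (H h : E → ℝ≥0) (hHm : Measurable H)
    (Phi : ℝ≥0 → ℝ≥0) (hPhim : Measurable Phi)
    (n₀ : ℝ≥0)
    (hh : ∀ x : E, n₀ < H x → h x ≤ H x)
    (n : ℝ≥0) (hn : max n₀ 1 ≤ n)
    (hPhipos : ∀ y : ℝ≥0, n < y → 0 < Phi y) :
    ∫⁻ x in {x : E | n < H x}, (1 + (h x : ENNReal)) ∂ν
      ≤ ((n : ENNReal)⁻¹ + ⨆ y ∈ Set.Ioi n, (y : ENNReal) / (Phi y : ENNReal)) *
          ∫⁻ x, ((H x : ENNReal) + (Phi (H x) : ENNReal)) ∂ν := by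
  obtain ⟨hn₀, hn₁⟩ := max_le_iff.1 hn
  refine setLIntegral_le_const_mul_lintegral (measurableSet_lt measurable_const hHm)
    (by fun_prop) _ fun x hx => ?_
  exact one_add_le_mul_add_of_lt (one_pos.trans_le hn₁).ne' hx (hh x (hn₀.trans_lt hx))
    (hPhipos _ hx)

theorem superlevel_integral_bound
    {E : Type*} [MeasurableSpace E]
    (ν : Measure E) [IsFiniteMeasure ν]
    (H h : E → ℝ≥0) (hHm : Measurable H) (hhm : Measurable h)
    (Phi : ℝ≥0 → ℝ≥0) (hPhim : Measurable Phi)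
    (n₀ : ℝ≥0)
    (hh : ∀ x : E, n₀ < H x → h x ≤ H x)
    (n : ℝ≥0) (hn : max n₀ 1 ≤ n)
    (hPhipos : ∀ y : ℝ≥0, n < y → 0 < Phi y) :
    ∫⁻ x in {x : E | n < H x}, (1 + (h x : ENNReal)) ∂ν
      ≤ ((n : ENNReal)⁻¹ + ⨆ y ∈ Set.Ioi n, (y : ENNReal) / (Phi y : ENNReal)) *
          ∫⁻ x, ((H x : ENNReal) + (Phi (H x) : ENNReal)) ∂ν :=
  superlevel_integral_bound_general ν H h hHm Phi hPhim n₀ hh n hn hPhipos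
end
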